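/- Let L and D be N×N matrices with nonnegative real entries such that L_{jl} ≤ L_{jj}, L_{jl} ≤ L_{ll}, and D_{jl} ≤ max{D_{jj}, D_{ll}} for all j, l ∈ {1,…,N}. Then ∑_{j,l=1}^N (1/N)·√(L_{jl}·D_{jl}) ≤ 2 ∑_{j=1}^N √(L_{jj}·D_{jj}). -/

import Mathlib

open scoped BigOperators ComplexConjugate ComplexOrder
open Matrix MeasureTheory Filter

noncomputable section

namespace CompoundQI

/-- Square matrices over `ℂ` indexed by `Fin n`, modelling the operators `B(ℂⁿ)` on an
`n`-dimensional complex Hilbert space. -/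
abbrev Mat (n : ℕ) := Matrix (Fin n) (Fin n) ℂ

/-- Matrices on the `l`-fold tensor power `(ℂᵈ)^{⊗ l}`. -/
abbrev TMat (d l : ℕ) := Matrix (Fin l → Fin d) (Fin l → Fin d) ℂ

instance {m n : Type*} : MeasurableSpace (Matrix m n ℂ) :=
  inferInstanceAs (MeasurableSpace (m → n → ℂ))

/-- A density operator (state): positive semidefinite with trace one. -/
def IsState {α : Type*} [Fintype α] (ρ : Matrix α α ℂ) : Prop :=
  ρ.PosSemidef ∧ ρ.trace = 1

/-- `f` is completely positive and trace preserving, expressed through the existence of a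
Kraus representation `f x = ∑ i, a i * x * (a i)ᴴ` with `∑ i, (a i)ᴴ * a i = 1`. -/
def IsCPTP {α β : Type*} [Fintype α] [Fintype β] [DecidableEq α]
    (f : Matrix α α ℂ → Matrix β β ℂ) : Prop :=
  ∃ (ι : Type) (_ : Fintype ι) (a : ι → Matrix β α ℂ),
    (∑ i, (a i)ᴴ * a i) = 1 ∧ ∀ x, f x = ∑ i, a i * x * (a i)ᴴ

/-- `f` is completely positive and trace decreasing with a Kraus representation consisting
of `r` Kraus operators. -/
def IsCPTNWith {α β : Type*} [Fintype α] [Fintype β] [DecidableEq α] (r : ℕ)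
    (f : Matrix α α ℂ → Matrix β β ℂ) : Prop :=
  ∃ a : Fin r → Matrix β α ℂ,
    ((1 : Matrix α α ℂ) - ∑ i, (a i)ᴴ * a i).PosSemidef ∧ ∀ x, f x = ∑ i, a i * x * (a i)ᴴ

/-- `f` is completely positive and trace decreasing (`f ∈ C↓`). -/
def IsCPTN {α β : Type*} [Fintype α] [Fintype β] [DecidableEq α]
    (f : Matrix α α ℂ → Matrix β β ℂ) : Prop :=
  ∃ r : ℕ, IsCPTNWith r f

/-- The extension `id ⊗ f` of a (linear) map `f` on matrices to matrices on a product
index set, obtained by applying `f` blockwise. -/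
def idTensor {γ α β : Type*} (f : Matrix α α ℂ → Matrix β β ℂ)
    (M : Matrix (γ × α) (γ × α) ℂ) : Matrix (γ × β) (γ × β) ℂ :=
  fun p q => f (fun i j => M (p.1, i) (q.1, j)) p.2 q.2

/-- The `l`-fold tensor power `f^{⊗l}` of a (linear) map on matrices, defined entrywise by
expanding in the standard matrix units. -/
def tensorPow {n m : ℕ} (f : Mat n → Mat m) (l : ℕ) (M : TMat n l) : TMat m l :=
  fun I J => ∑ i : Fin l → Fin n, ∑ j : Fin l → Fin n,
    M i j * ∏ t, f (Matrix.single (i t) (j t) 1) (I t) (J t)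

/-- The canonical purification of a positive semidefinite `ρ`, i.e. a vector
`ψ ∈ H ⊗ H` with `tr₁ |ψ⟩⟨ψ| = ρ`; junk value `0` if `ρ` is not positive semidefinite. -/
def purif {α : Type*} [Fintype α] [DecidableEq α] (ρ : Matrix α α ℂ) : α × α → ℂ :=
  open scoped Classical in
  if h : ρ.PosSemidef then (fun p => (h.1.eigenvectorUnitary.1 * diagonal ((fun x : ℝ => (x : ℂ)) ∘ (√·) ∘ h.1.eigenvalues) *
    (star h.1.eigenvectorUnitary : Matrix α α ℂ)) p.2 p.1) else 0

/-- The rank-one operator `|ψ⟩⟨ψ|` associated with a vector. -/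
def pureMat {α : Type*} (ψ : α → ℂ) : Matrix α α ℂ :=
  fun p q => ψ p * conj (ψ q)

/-- `⟨ψ, M ψ⟩` for a vector `ψ` and a matrix `M`, as a real number. -/
def vecQuad {α : Type*} [Fintype α] (ψ : α → ℂ) (M : Matrix α α ℂ) : ℝ :=
  (∑ p, ∑ q, conj (ψ p) * M p q * ψ q).re

/-- Embedding of a vector in `ℂᵏ ⊗ ℂᵏ` into `ℂᵏ ⊗ ℂᵐ` (for `k ≤ m`). -/
def embVec {k m : ℕ} (ψ : Fin k × Fin k → ℂ) : Fin k × Fin m → ℂ :=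
  fun p => if h : (p.2 : ℕ) < k then ψ (p.1, ⟨p.2, h⟩) else 0

/-- Entanglement fidelity `F_e(ρ, f) = ⟨ψ, (id ⊗ f)(|ψ⟩⟨ψ|) ψ⟩`, where `ψ` is a
purification of `ρ`; the codomain `ℂᵐ` of `f` may be larger than its domain `ℂᵏ`, the
purification being embedded canonically. -/
def entFid {k m : ℕ} (ρ : Mat k) (f : Mat k → Mat m) : ℝ :=
  vecQuad (embVec (purif ρ)) (idTensor f (pureMat (purif ρ)))

/-- The optimal entanglement fidelity `F_{c,e}(ρ, f) = sup_R F_e(ρ, R ∘ f)` over all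
recovery channels `R`. -/
def optEntFid {k m : ℕ} (ρ : Mat k) (f : Mat k → Mat m) : ℝ :=
  ⨆ R : {R : Mat m → Mat k // IsCPTP R}, entFid ρ (R.1 ∘ f)

/-- von Neumann entropy `S(ρ) = -tr ρ log₂ ρ` (via eigenvalues, with `0 log 0 = 0`). -/
def vonNeumann {α : Type*} [Fintype α] [DecidableEq α] (ρ : Matrix α α ℂ) : ℝ :=
  open scoped Classical in
  if h : ρ.IsHermitian then -∑ i, h.eigenvalues i * Real.logb 2 (h.eigenvalues i) else 0

/-- Coherent information `I_c(ρ, f) = S(f ρ) - S((id ⊗ f)(|ψ⟩⟨ψ|))` for a purification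
`ψ` of `ρ`. -/
def cohInfo {α β : Type*} [Fintype α] [Fintype β] [DecidableEq α] [DecidableEq β]
    (ρ : Matrix α α ℂ) (f : Matrix α α ℂ → Matrix β β ℂ) : ℝ :=
  vonNeumann (f ρ) - vonNeumann (idTensor f (pureMat (purif ρ)))

/-- The maximally mixed state on `ℂᵏ`. -/
def maxMixed (k : ℕ) : Mat k := (k : ℂ)⁻¹ • (1 : Mat k)

/-- The maximally mixed state `π_G = q_G / tr q_G` on the range of a projection `q_G`. -/
def projState {α : Type*} [Fintype α] (p : Matrix α α ℂ) : Matrix α α ℂ :=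
  (p.trace)⁻¹ • p

/-- `p` is an orthogonal projection. -/
def IsProjection {α : Type*} [Fintype α] (p : Matrix α α ℂ) : Prop :=
  p.IsHermitian ∧ p * p = p

/-- Trace norm of a complex matrix. -/
def trNorm {α β : Type*} [Fintype α] [Fintype β] [DecidableEq β] (a : Matrix α β ℂ) : ℝ :=
  ((Matrix.posSemidef_conjTranspose_mul_self a).1.eigenvectorUnitary.1 *
    diagonal ((fun x : ℝ => (x : ℂ)) ∘ (√·) ∘ (Matrix.posSemidef_conjTranspose_mul_self a).1.eigenvalues) *
    (star (Matrix.posSemidef_conjTranspose_mul_self a).1.eigenvectorUnitary :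
      Matrix β β ℂ)).trace.re

/-- Hilbert–Schmidt norm of a complex matrix. -/
def hsNorm {α β : Type*} [Fintype α] [Fintype β] (a : Matrix α β ℂ) : ℝ :=
  Real.sqrt ((aᴴ * a).trace.re)

/-- Diamond norm of a (linear) map between matrix spaces. -/
def dnorm {α β : Type*} [Fintype α] [Fintype β] [DecidableEq α] [DecidableEq β]
    (f : Matrix α α ℂ → Matrix β β ℂ) : ℝ :=
  ⨆ r : ℕ, ⨆ a : {a : Matrix (Fin r × α) (Fin r × α) ℂ // trNorm a = 1},
    trNorm (idTensor f (a.1))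

/-- The unitary group `𝔘(G)` of the range `G` of the projection `p_G`, canonically embedded
into the unitaries of the ambient space: unitaries acting as the identity on `G^⊥`. -/
def UGset {n : ℕ} (pG : Mat n) : Set (Mat n) :=
  {u | u ∈ Matrix.unitaryGroup (Fin n) ℂ ∧ u * (1 - pG) = 1 - pG}

/-- `μ` is the normalized Haar measure of the unitary group `𝔘(G)` of the range of `p_G`,
viewed as a (bi-invariant) probability measure on matrix space carried by `𝔘(G)`. -/
def IsHaarOn {n : ℕ} (pG : Mat n) (μ : Measure (Mat n)) : Prop :=
  IsProbabilityMeasure μ ∧ μ (UGset pG) = 1 ∧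
    (∀ u ∈ UGset pG, Measure.map (fun x => u * x) μ = μ) ∧
    (∀ u ∈ UGset pG, Measure.map (fun x => x * u) μ = μ)

variable {dH dK : ℕ}

/-- `R` is an achievable rate for entanglement transmission over the compound channel `𝔍`
with uninformed users. -/
def AchievableUU (𝔍 : Set (Mat dH → Mat dK)) (R : ℝ) : Prop :=
  ∃ (k k' : ℕ → ℕ) (P : ∀ l, Mat (k l) → TMat dH l) (D : ∀ l, TMat dK l → Mat (k' l)),
    (∀ l, 1 ≤ k l) ∧ (∀ l, k l ≤ k' l) ∧ (∀ l, IsCPTP (P l)) ∧ (∀ l, IsCPTP (D l)) ∧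
    R ≤ atTop.liminf (fun l => Real.logb 2 (k l) / l) ∧
    Tendsto (fun l => ⨅ N : 𝔍, entFid (maxMixed (k l)) (D l ∘ tensorPow N.1 l ∘ P l))
      atTop (nhds 1)

/-- Achievable rates with informed decoder: the recovery operation may depend on the
channel. -/
def AchievableID (𝔍 : Set (Mat dH → Mat dK)) (R : ℝ) : Prop :=
  ∃ (k k' : ℕ → ℕ) (P : ∀ l, Mat (k l) → TMat dH l) (D : ∀ l, 𝔍 → TMat dK l → Mat (k' l)),
    (∀ l, 1 ≤ k l) ∧ (∀ l, k l ≤ k' l) ∧ (∀ l, IsCPTP (P l)) ∧ (∀ l N, IsCPTP (D l N)) ∧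
    R ≤ atTop.liminf (fun l => Real.logb 2 (k l) / l) ∧
    Tendsto (fun l => ⨅ N : 𝔍, entFid (maxMixed (k l)) (D l N ∘ tensorPow N.1 l ∘ P l))
      atTop (nhds 1)

/-- Achievable rates with informed encoder: the encoding operation may depend on the
channel. -/
def AchievableIE (𝔍 : Set (Mat dH → Mat dK)) (R : ℝ) : Prop :=
  ∃ (k k' : ℕ → ℕ) (P : ∀ l, 𝔍 → (Mat (k l) → TMat dH l)) (D : ∀ l, TMat dK l → Mat (k' l)),
    (∀ l, 1 ≤ k l) ∧ (∀ l, k l ≤ k' l) ∧ (∀ l N, IsCPTP (P l N)) ∧ (∀ l, IsCPTP (D l)) ∧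
    R ≤ atTop.liminf (fun l => Real.logb 2 (k l) / l) ∧
    Tendsto (fun l => ⨅ N : 𝔍, entFid (maxMixed (k l)) (D l ∘ tensorPow N.1 l ∘ P l N))
      atTop (nhds 1)

/-- Entanglement transmission capacity `Q(𝔍)` with uninformed users. -/
def Qcap (𝔍 : Set (Mat dH → Mat dK)) : ℝ := sSup {R | 0 ≤ R ∧ AchievableUU 𝔍 R}

/-- Entanglement transmission capacity `Q_ID(𝔍)` with informed decoder. -/
def QcapID (𝔍 : Set (Mat dH → Mat dK)) : ℝ := sSup {R | 0 ≤ R ∧ AchievableID 𝔍 R}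

/-- Entanglement transmission capacity `Q_IE(𝔍)` with informed encoder. -/
def QcapIE (𝔍 : Set (Mat dH → Mat dK)) : ℝ := sSup {R | 0 ≤ R ∧ AchievableIE 𝔍 R}

/-- `(1/l) max_ρ inf_{N ∈ 𝔍} I_c(ρ, N^{⊗l})`. -/
def maxInfCI (𝔍 : Set (Mat dH → Mat dK)) (l : ℕ) : ℝ :=
  (1 / l : ℝ) * ⨆ ρ : {ρ : TMat dH l // IsState ρ}, ⨅ N : 𝔍, cohInfo ρ.1 (tensorPow N.1 l)

/-- `(1/l) inf_{N ∈ 𝔍} max_ρ I_c(ρ, N^{⊗l})`. -/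
def infMaxCI (𝔍 : Set (Mat dH → Mat dK)) (l : ℕ) : ℝ :=
  (1 / l : ℝ) * ⨅ N : 𝔍, ⨆ ρ : {ρ : TMat dH l // IsState ρ}, cohInfo ρ.1 (tensorPow N.1 l)

/-- The standard maximally entangled state vector on `ℂᵏ ⊗ ℂᵏ`. -/
def maxEnt (k : ℕ) : Fin k × Fin k → ℂ :=
  fun p => if p.1 = p.2 then (Real.sqrt k : ℂ)⁻¹ else 0

/-- Fidelity `F(|ψ_l⟩⟨ψ_l|, (id ⊗ D ∘ N^{⊗l})(|φ⟩⟨φ|)) = ⟨ψ_l, ⋯ ψ_l⟩` achieved by an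
entanglement generation code `(D, φ)` for the channel `N` at block length `l`. -/
def egFid {dH dK : ℕ} (k l : ℕ) (N : Mat dH → Mat dK) (D : TMat dK l → Mat k)
    (φ : Fin k × (Fin l → Fin dH) → ℂ) : ℝ :=
  vecQuad (maxEnt k) (idTensor (D ∘ tensorPow N l) (pureMat φ))

/-- Achievable entanglement generation rates with uninformed users. -/
def AchievableEG (𝔍 : Set (Mat dH → Mat dK)) (R : ℝ) : Prop :=
  ∃ (k : ℕ → ℕ) (D : ∀ l, TMat dK l → Mat (k l)) (φ : ∀ l, Fin (k l) × (Fin l → Fin dH) → ℂ),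
    (∀ l, 1 ≤ k l) ∧ (∀ l, IsCPTP (D l)) ∧ (∀ l, ∑ p, ‖φ l p‖ ^ 2 = 1) ∧
    R ≤ atTop.liminf (fun l => Real.logb 2 (k l) / l) ∧
    Tendsto (fun l => ⨅ N : 𝔍, egFid (k l) l N.1 (D l) (φ l)) atTop (nhds 1)

/-- Achievable entanglement generation rates with informed decoder. -/
def AchievableEGID (𝔍 : Set (Mat dH → Mat dK)) (R : ℝ) : Prop :=
  ∃ (k : ℕ → ℕ) (D : ∀ l, 𝔍 → TMat dK l → Mat (k l))
    (φ : ∀ l, Fin (k l) × (Fin l → Fin dH) → ℂ),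
    (∀ l, 1 ≤ k l) ∧ (∀ l N, IsCPTP (D l N)) ∧ (∀ l, ∑ p, ‖φ l p‖ ^ 2 = 1) ∧
    R ≤ atTop.liminf (fun l => Real.logb 2 (k l) / l) ∧
    Tendsto (fun l => ⨅ N : 𝔍, egFid (k l) l N.1 (D l N) (φ l)) atTop (nhds 1)

/-- Achievable entanglement generation rates with informed encoder. -/
def AchievableEGIE (𝔍 : Set (Mat dH → Mat dK)) (R : ℝ) : Prop :=
  ∃ (k : ℕ → ℕ) (D : ∀ l, TMat dK l → Mat (k l))
    (φ : ∀ l, 𝔍 → Fin (k l) × (Fin l → Fin dH) → ℂ),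
    (∀ l, 1 ≤ k l) ∧ (∀ l, IsCPTP (D l)) ∧ (∀ l N, ∑ p, ‖φ l N p‖ ^ 2 = 1) ∧
    R ≤ atTop.liminf (fun l => Real.logb 2 (k l) / l) ∧
    Tendsto (fun l => ⨅ N : 𝔍, egFid (k l) l N.1 (D l) (φ l N)) atTop (nhds 1)

/-- Entanglement-generating capacity `E(𝔍)` with uninformed users. -/
def Ecap (𝔍 : Set (Mat dH → Mat dK)) : ℝ := sSup {R | 0 ≤ R ∧ AchievableEG 𝔍 R}

/-- Entanglement-generating capacity `E_ID(𝔍)` with informed decoder. -/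
def EcapID (𝔍 : Set (Mat dH → Mat dK)) : ℝ := sSup {R | 0 ≤ R ∧ AchievableEGID 𝔍 R}

/-- Entanglement-generating capacity `E_IE(𝔍)` with informed encoder. -/
def EcapIE (𝔍 : Set (Mat dH → Mat dK)) : ℝ := sSup {R | 0 ≤ R ∧ AchievableEGIE 𝔍 R}

/-- Hausdorff distance `D_⋄` between sets of channels, induced by the diamond norm. -/
def Ddiamond (𝔍 𝔍' : Set (Mat dH → Mat dK)) : ℝ :=
  max (⨆ N : 𝔍, ⨅ N' : 𝔍', dnorm (N.1 - N'.1)) (⨆ N' : 𝔍', ⨅ N : 𝔍, dnorm (N.1 - N'.1))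

/-- Binary entropy (base two). -/
def binEnt (x : ℝ) : ℝ := -(x * Real.logb 2 x) - (1 - x) * Real.logb 2 (1 - x)

/-- The continuity modulus `ν(x) = x + 8 x log₂(dim K) + 4 h(x)`. -/
def nuMod (dK : ℕ) (x : ℝ) : ℝ := x + 8 * x * Real.logb 2 dK + 4 * binEnt x


/-- The sesquilinear matrix element `⟨z, M w⟩`. -/
def matElem {β : Type*} [Fintype β] (z : β → ℂ) (M : Matrix β β ℂ) (w : β → ℂ) : ℂ :=
  ∑ i, ∑ j, conj (z i) * M i j * w j

/-- The rank one operator `|x⟩⟨y|`. -/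
def outerMat {α β : Type*} (x : α → ℂ) (y : β → ℂ) : Matrix α β ℂ :=
  fun i j => x i * conj (y j)

/-! Each `√(L_{jl} D_{jl})` is at most `√(L_{jj} D_{jj}) + √(L_{ll} D_{ll})`: pick the index
whose diagonal `D`-entry realises the maximum, and bound `L_{jl}` by that index's diagonal
entry as well. Averaging this over `l` costs the factor `2`. -/

theorem sqrt_mul_le_sqrt_mul {a b c d : ℝ} (hac : a ≤ c) (hb : 0 ≤ b) (hbd : b ≤ d) :
    √(a * b) ≤ √(c * d) := by
  rcases le_or_gt 0 c with hc | hc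
  · exact Real.sqrt_le_sqrt (mul_le_mul hac hbd hb hc)
  · rw [Real.sqrt_eq_zero_of_nonpos (mul_nonpos_of_nonpos_of_nonneg (by linarith) hb)]
    exact Real.sqrt_nonneg _

theorem sqrt_mul_offDiag_le {ι : Type*} {L D : ι → ι → ℝ} (hD0 : ∀ j l, 0 ≤ D j l)
    (hL1 : ∀ j l, L j l ≤ L j j) (hL2 : ∀ j l, L j l ≤ L l l)
    (hD : ∀ j l, D j l ≤ max (D j j) (D l l)) (j l : ι) :
    √(L j l * D j l) ≤ √(L j j * D j j) + √(L l l * D l l) := by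
  rcases le_total (D j j) (D l l) with h | h
  · have hDl : D j l ≤ D l l := (hD j l).trans_eq (max_eq_right h)
    exact (sqrt_mul_le_sqrt_mul (hL2 j l) (hD0 j l) hDl).trans
      (le_add_of_nonneg_left (Real.sqrt_nonneg _))
  · have hDj : D j l ≤ D j j := (hD j l).trans_eq (max_eq_left h)
    exact (sqrt_mul_le_sqrt_mul (hL1 j l) (hD0 j l) hDj).trans
      (le_add_of_nonneg_right (Real.sqrt_nonneg _))

theorem sum_sum_inv_card_mul_add {ι : Type*} [Fintype ι] (g : ι → ℝ) :
    ∑ j, ∑ l, (Fintype.card ι : ℝ)⁻¹ * (g j + g l) = 2 * ∑ j, g j := by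
  rcases isEmpty_or_nonempty ι with _ | _
  · simp
  have hcard : (Fintype.card ι : ℝ) ≠ 0 := by positivity
  simp only [mul_add, Finset.sum_add_distrib, Finset.sum_const, Finset.card_univ, nsmul_eq_mul,
    ← Finset.mul_sum]
  field_simp
  ring

theorem sum_sum_inv_card_mul_le {ι : Type*} [Fintype ι] {f : ι → ι → ℝ} {g : ι → ℝ}
    (h : ∀ j l, f j l ≤ g j + g l) :
    ∑ j, ∑ l, (Fintype.card ι : ℝ)⁻¹ * f j l ≤ 2 * ∑ j, g j := by
  rw [← sum_sum_inv_card_mul_add]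
  gcongr with j _ l _
  exact h j l

theorem matrix_sqrt_average_bound_general (N : ℕ) (L D : Fin N → Fin N → ℝ)
    (hD0 : ∀ j l, 0 ≤ D j l)
    (hL1 : ∀ j l, L j l ≤ L j j) (hL2 : ∀ j l, L j l ≤ L l l)
    (hD : ∀ j l, D j l ≤ max (D j j) (D l l)) :
    ∑ j, ∑ l, (N : ℝ)⁻¹ * Real.sqrt (L j l * D j l) ≤
      2 * ∑ j, Real.sqrt (L j j * D j j) := by
  simpa using sum_sum_inv_card_mul_le (sqrt_mul_offDiag_le hD0 hL1 hL2 hD)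

/-- **Matrix square-root averaging lemma.** If `L_{jl} ≤ L_{jj}`, `L_{jl} ≤ L_{ll}` and
`D_{jl} ≤ max{D_{jj}, D_{ll}}` for nonnegative matrices `L, D`, then
`∑_{j,l} (1/N) √(L_{jl} D_{jl}) ≤ 2 ∑_j √(L_{jj} D_{jj})`. -/
theorem matrix_sqrt_average_bound (N : ℕ) (L D : Fin N → Fin N → ℝ)
    (hL0 : ∀ j l, 0 ≤ L j l) (hD0 : ∀ j l, 0 ≤ D j l)
    (hL1 : ∀ j l, L j l ≤ L j j) (hL2 : ∀ j l, L j l ≤ L l l)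
    (hD : ∀ j l, D j l ≤ max (D j j) (D l l)) :
    ∑ j, ∑ l, (N : ℝ)⁻¹ * Real.sqrt (L j l * D j l) ≤
      2 * ∑ j, Real.sqrt (L j j * D j j) :=
  matrix_sqrt_average_bound_general N L D hD0 hL1 hL2 hD

end CompoundQI
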